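/- The representation ϱ_{1,0} of D_∞ on ℂβ_r ⊕ ℂβ_t (r·β_r = -β_r, r·β_t = β_t + β_r, t·β_t = -β_t, t·β_r = β_r) has ℂβ_r as a subrepresentation on which r acts by -1 and t acts by 1, the quotient being the one-dimensional representation with r ↦ 1, t ↦ -1, and ϱ_{1,0} is indecomposable (not a direct sum of two one-dimensional subrepresentations). -/

import Mathlib

/-!
The rotation `r 1 = sr 0 * sr 1` acts on `ℂβ_r ⊕ ℂβ_t` as minus a nontrivial Jordan block:
`ρ (r 1) + 1` kills `β_r` and sends `β_t` to `-β_r`, so it is nilpotent and nonzero. A line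
invariant under a nilpotent map is an eigenline with a nilpotent, hence zero, eigenvalue, so it
lies in the kernel; two complementary invariant lines would then force `ρ (r 1) + 1 = 0`.
-/

open DihedralGroup Module

theorem DihedralGroup.closure_sr_zero_sr_one {n : ℕ} :
    Subgroup.closure {sr 0, sr 1} = (⊤ : Subgroup (DihedralGroup n)) := by
  set H := Subgroup.closure ({sr 0, sr 1} : Set (DihedralGroup n))
  have h0 : sr 0 ∈ H := Subgroup.subset_closure (by simp)
  have h1 : sr 1 ∈ H := Subgroup.subset_closure (by simp)
  have hr : ∀ i : ZMod n, r i ∈ H := fun i => by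
    rw [← ZMod.intCast_zmod_cast i, ← r_one_zpow, ← sub_zero (1 : ZMod n), ← sr_mul_sr]
    exact zpow_mem (mul_mem h0 h1) _
  rw [eq_top_iff]
  rintro (i | i) -
  · exact hr i
  · simpa using mul_mem h0 (hr i)

theorem Representation.map_eq_self_of_closure_eq_top {k G V : Type*} [CommSemiring k] [Group G]
    [AddCommMonoid V] [Module k V] (ρ : Representation k G V) {s : Set G}
    (hs : Subgroup.closure s = ⊤) {p : Submodule k V} (h : ∀ g ∈ s, p.map (ρ g) = p) (g : G) :
    p.map (ρ g) = p := by
  induction (hs ▸ Subgroup.mem_top g : g ∈ Subgroup.closure s) using Subgroup.closure_induction with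
  | mem g hg => exact h g hg
  | one => rw [map_one, Module.End.one_eq_id, Submodule.map_id]
  | mul x y _ _ hx hy => rw [map_mul, Module.End.mul_eq_comp, Submodule.map_comp, hy, hx]
  | inv x _ hx =>
    conv_lhs => rw [← hx]
    rw [← Submodule.map_comp, ← Module.End.mul_eq_comp, ← map_mul, inv_mul_cancel, map_one,
      Module.End.one_eq_id, Submodule.map_id]

theorem Submodule.le_ker_of_isNilpotent_of_finrank_eq_one {K V : Type*} [Field K]
    [AddCommGroup V] [Module K V] {f : End K V} (hf : IsNilpotent f) {p : Submodule K V}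
    (hp : ∀ v ∈ p, f v ∈ p) (h1 : finrank K p = 1) : p ≤ LinearMap.ker f := by
  obtain ⟨v, hvp, hv0⟩ := p.exists_mem_ne_zero_of_ne_bot (by rintro rfl; simp at h1)
  have hspan := eq_span_singleton_of_mem_of_finrank_eq_one h1 hvp hv0
  obtain ⟨c, hc⟩ := Submodule.mem_span_singleton.mp (hspan ▸ hp v hvp)
  have hc0 : c = 0 := (Module.End.hasEigenvalue_of_hasEigenvector
    ⟨Module.End.mem_eigenspace_iff.mpr hc.symm, hv0⟩ |>.isNilpotent_of_isNilpotent hf).eq_zero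
  rw [hspan, Submodule.span_singleton_le_iff_mem, LinearMap.mem_ker, ← hc, hc0, zero_smul]

theorem Module.End.eq_zero_of_isNilpotent_of_sup_eq_top {K V : Type*} [Field K]
    [AddCommGroup V] [Module K V] {f : End K V} (hf : IsNilpotent f) {p q : Submodule K V}
    (hp : ∀ v ∈ p, f v ∈ p) (hq : ∀ v ∈ q, f v ∈ q)
    (hp1 : finrank K p = 1) (hq1 : finrank K q = 1) (hpq : p ⊔ q = ⊤) : f = 0 := by
  rw [← LinearMap.ker_eq_top, eq_top_iff, ← hpq]
  exact sup_le (p.le_ker_of_isNilpotent_of_finrank_eq_one hf hp hp1)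
    (q.le_ker_of_isNilpotent_of_finrank_eq_one hf hq hq1)

section

variable {βr βt : Fin 2 → ℂ} {ρ : Representation ℂ (DihedralGroup 0) (Fin 2 → ℂ)}

theorem rho_r_one_add_one_apply_βr (hrr : ρ (sr 0) βr = -βr) (htr : ρ (sr 1) βr = βr) :
    (ρ (r 1) + 1) βr = 0 := by
  rw [show (r 1 : DihedralGroup 0) = sr 0 * sr 1 by simp, map_mul]
  simp [htr, hrr]

theorem rho_r_one_add_one_apply_βt (hrt : ρ (sr 0) βt = βt + βr) (htt : ρ (sr 1) βt = -βt) :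
    (ρ (r 1) + 1) βt = -βr := by
  rw [show (r 1 : DihedralGroup 0) = sr 0 * sr 1 by simp, map_mul]
  simp [htt, hrt]

theorem isNilpotent_rho_r_one_add_one (hβr : βr = Pi.single 0 1) (hβt : βt = Pi.single 1 1)
    (hrr : ρ (sr 0) βr = -βr) (hrt : ρ (sr 0) βt = βt + βr)
    (htt : ρ (sr 1) βt = -βt) (htr : ρ (sr 1) βr = βr) :
    IsNilpotent (ρ (r 1) + 1) := by
  refine ⟨2, (Pi.basisFun ℂ (Fin 2)).ext (Fin.forall_fin_two.mpr ⟨?_, ?_⟩)⟩ <;>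
  simp only [Pi.basisFun_apply, ← hβr, ← hβt, pow_two, Module.End.mul_apply,
    rho_r_one_add_one_apply_βr hrr htr, rho_r_one_add_one_apply_βt hrt htt, map_neg, map_zero,
    neg_zero, LinearMap.zero_apply]

end

/-- The representation `ϱ_{1,0}` of `D_∞` has `ℂβ_r` as a subrepresentation with
`r ↦ -1`, `t ↦ 1`; the quotient carries `r ↦ 1`, `t ↦ -1`; and `ϱ_{1,0}` is not a
direct sum of two one-dimensional subrepresentations. -/
theorem varrho_one_zero_indecomposable
    (βr βt : Fin 2 → ℂ) (hβr : βr = Pi.single 0 1) (hβt : βt = Pi.single 1 1)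
    (ρ : Representation ℂ (DihedralGroup 0) (Fin 2 → ℂ))
    (hrr : ρ (sr 0) βr = -βr) (hrt : ρ (sr 0) βt = βt + βr)
    (htt : ρ (sr 1) βt = -βt) (htr : ρ (sr 1) βr = βr) :
    -- ℂβ_r is a subrepresentation, on which r acts by -1 and t by 1
    (∀ (g : DihedralGroup 0), ∀ v ∈ Submodule.span ℂ {βr}, ρ g v ∈ Submodule.span ℂ {βr}) ∧
    ρ (sr 0) βr = -βr ∧ ρ (sr 1) βr = βr ∧
    -- on the quotient modulo ℂβ_r, r acts by 1 and t acts by -1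
    ρ (sr 0) βt - βt ∈ Submodule.span ℂ {βr} ∧
    ρ (sr 1) βt + βt ∈ Submodule.span ℂ {βr} ∧
    -- indecomposability
    ¬ ∃ p q : Submodule ℂ (Fin 2 → ℂ),
        (∀ (g : DihedralGroup 0), ∀ v ∈ p, ρ g v ∈ p) ∧
        (∀ (g : DihedralGroup 0), ∀ v ∈ q, ρ g v ∈ q) ∧
        Module.finrank ℂ p = 1 ∧ Module.finrank ℂ q = 1 ∧ IsCompl p q := by
  have hβr0 : βr ≠ 0 := by simp [hβr]
  have hline : ∀ g, (Submodule.span ℂ {βr}).map (ρ g) = Submodule.span ℂ {βr} :=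
    ρ.map_eq_self_of_closure_eq_top closure_sr_zero_sr_one (by
      rintro g (rfl | rfl) <;> simp only [Submodule.map_span, Set.image_singleton, hrr, htr,
        ← neg_one_smul ℂ βr, Submodule.span_singleton_smul_eq isUnit_one.neg])
  refine ⟨fun g v hv => hline g ▸ Submodule.mem_map_of_mem hv, hrr, htr, ?_, ?_, ?_⟩
  · simp [hrt, Submodule.mem_span_singleton_self]
  · simp [htt]
  rintro ⟨p, q, hp, hq, hp1, hq1, hpq⟩
  have hzero := Module.End.eq_zero_of_isNilpotent_of_sup_eq_top
    (isNilpotent_rho_r_one_add_one hβr hβt hrr hrt htt htr)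
    (fun v hv => p.add_mem (hp _ v hv) hv) (fun v hv => q.add_mem (hq _ v hv) hv) hp1 hq1
    hpq.sup_eq_top
  exact hβr0 (by simpa [hzero] using (rho_r_one_add_one_apply_βt hrt htt).symm)
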